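/- arXiv:1502.01670 — 2 statements merged into one kernel-verified Lean document; each statement's English description precedes it below -/
import Mathlib

section
/- Let V = Z(f) be an irreducible two-dimensional surface in ℂ³ for which there exists a nonempty Zariski-open dense subset O ⊆ V such that every point of O is incident to a line fully contained in V. Then every point of V is incident to a line fully contained in V. -/
/-!
A point `p` lies on a line contained in `Z(f)` iff the forms `G n` in `v` given by the
coefficients of `tⁿ` in `f (p + t • v)` have a common zero `v ≠ 0`. If they have none, the
Nullstellensatz puts a power of every variable into the ideal they generate, so in some degree `N`
their Macaulay matrix has full row rank; if they have one, it never does. The entries of that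
matrix are polynomials in `p`, so a nonvanishing maximal minor is a polynomial `h` with
`h p ≠ 0` that vanishes at every point lying on a line of `Z(f)`: these points form a Zariski
closed set. By hypothesis `h` then vanishes on the nonempty open subset `Z(f) \ C`, so `h g`
vanishes on `Z(f)` for some `g` not divisible by `f`; as `f` is prime, `f ∣ h` and `h p = 0`.
-/

namespace Matrix

variable {m n K : Type*} [Fintype m] [Fintype n] [DecidableEq m] [Field K]

theorem surjective_mulVec_iff_exists_det_submatrix_ne_zero (A : Matrix m n K) :
    Function.Surjective A.mulVec ↔ ∃ g : m → n, (A.submatrix id g).det ≠ 0 := by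
  rw [← coe_mulVecLin, ← LinearMap.range_eq_top, range_mulVecLin]
  constructor
  · intro hspan
    obtain ⟨κ, a, ha, hspan_a, hli⟩ := exists_linearIndependent' K A.col
    have := Fintype.ofInjective a ha
    have hcard : Fintype.card m = Fintype.card κ := by
      rw [linearIndependent_iff_card_eq_finrank_span.mp hli, Set.finrank, hspan_a, hspan,
        finrank_top, Module.finrank_fintype_fun_eq_card]
    refine ⟨a ∘ Fintype.equivOfCardEq hcard, ?_⟩
    rw [← isUnit_iff_ne_zero, ← isUnit_iff_isUnit_det, ← linearIndependent_cols_iff_isUnit]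
    exact hli.comp _ (Fintype.equivOfCardEq hcard).injective
  · rintro ⟨g, hg⟩
    have hsurj : Function.Surjective (A.submatrix id g).mulVecLin :=
      mulVec_surjective_iff_isUnit.mpr ((isUnit_iff_isUnit_det _).mpr (isUnit_iff_ne_zero.mpr hg))
    rw [eq_top_iff, ← LinearMap.range_eq_top.mpr hsurj, range_mulVecLin]
    exact Submodule.span_mono (Set.range_comp_subset_range g A.col)

end Matrix

noncomputable section

open Matrix

namespace MvPolynomial

section Zariski

variable {σ K : Type*} [Field K]

theorem exists_eval_ne_zero_of_surjective_mulVec {m n : Type*} [Fintype m] [Fintype n]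
    (A : Matrix m n (MvPolynomial σ K)) {p : σ → K}
    (hp : Function.Surjective (A.map (eval p)).mulVec) :
    ∃ h : MvPolynomial σ K, eval p h ≠ 0 ∧
      ∀ x, eval x h ≠ 0 → Function.Surjective (A.map (eval x)).mulVec := by
  classical
  have eval_det (x : σ → K) (g : m → n) :
      eval x (A.submatrix id g).det = ((A.map (eval x)).submatrix id g).det := by
    rw [RingHom.map_det, RingHom.mapMatrix_apply, Matrix.submatrix_map]
  obtain ⟨g, hg⟩ := (surjective_mulVec_iff_exists_det_submatrix_ne_zero _).mp hp
  refine ⟨(A.submatrix id g).det, by rwa [eval_det], fun x hx => ?_⟩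
  exact (surjective_mulVec_iff_exists_det_submatrix_ne_zero _).mpr ⟨g, eval_det x g ▸ hx⟩

theorem eval_eq_zero_of_vanishes_on_basicOpen [IsAlgClosed K] [Finite σ]
    {f g h : MvPolynomial σ K} (hf : Irreducible f) {q : σ → K} (hfq : eval q f = 0)
    (hgq : eval q g ≠ 0) (hh : ∀ x, eval x f = 0 → eval x g ≠ 0 → eval x h = 0)
    {x : σ → K} (hfx : eval x f = 0) :
    eval x h = 0 := by
  have hmem : h * g ∈ vanishingIdeal K (zeroLocus K (Ideal.span {f})) := by
    rw [mem_vanishingIdeal_iff]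
    intro y hy
    have hfy : eval y f = 0 := hy f (Ideal.subset_span rfl)
    by_cases hgy : eval y g = 0
    · simp [hgy]
    · simp [hh y hfy hgy]
  rw [vanishingIdeal_zeroLocus_eq_radical] at hmem
  obtain ⟨n, hn⟩ := Ideal.mem_radical_iff.mp hmem
  have hprime : Prime f := hf.prime
  rcases hprime.dvd_or_dvd (hprime.dvd_of_dvd_pow (Ideal.mem_span_singleton.mp hn)) with
    ⟨c, rfl⟩ | ⟨c, rfl⟩
  · simp [hfx]
  · simp [hfq] at hgq

end Zariski

section Macaulay

variable {σ R : Type*}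

def ExponentsOfDegree (σ : Type*) (N : ℕ) : Set (σ →₀ ℕ) := {d | d.degree = N}

instance [Finite σ] (N : ℕ) : Fintype (ExponentsOfDegree σ N) :=
  (Finsupp.finite_of_degree_eq N).fintype

abbrev MacaulayCols (σ : Type*) (N : ℕ) : Type _ := Σ i : Fin (N + 1), ExponentsOfDegree σ (N - i)

variable [CommRing R]

def degreeCoeffs (N : ℕ) : MvPolynomial σ R →ₗ[R] (ExponentsOfDegree σ N → R) :=
  LinearMap.pi fun d => lcoeff R d.1

@[simp]
theorem degreeCoeffs_apply (N : ℕ) (H : MvPolynomial σ R) (d : ExponentsOfDegree σ N) :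
    degreeCoeffs N H d = coeff d.1 H := rfl

theorem IsHomogeneous.degreeCoeffs_eq_zero {H : MvPolynomial σ R} {n N : ℕ}
    (hH : H.IsHomogeneous n) (hn : n ≠ N) : degreeCoeffs N H = 0 :=
  _root_.funext fun d => hH.coeff_eq_zero fun hd => hn (hd.symm.trans d.2)

theorem IsHomogeneous.eq_of_degreeCoeffs_eq {H H' : MvPolynomial σ R} {N : ℕ}
    (hH : H.IsHomogeneous N) (hH' : H'.IsHomogeneous N)
    (h : degreeCoeffs N H = degreeCoeffs N H') : H = H' := by
  ext d
  by_cases hd : d.degree = N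
  · exact congr_fun h ⟨d, hd⟩
  · rw [hH.coeff_eq_zero hd, hH'.coeff_eq_zero hd]

def macaulayColumn (G : ℕ → MvPolynomial σ R) {N : ℕ} (c : MacaulayCols σ N) :
    MvPolynomial σ R :=
  monomial c.2.1 1 * G c.1

def macaulayMatrix (G : ℕ → MvPolynomial σ R) (N : ℕ) :
    Matrix (ExponentsOfDegree σ N) (MacaulayCols σ N) R :=
  fun d c => coeff d.1 (macaulayColumn G c)

theorem map_macaulayMatrix {S : Type*} [CommRing S] (φ : R →+* S) (G : ℕ → MvPolynomial σ R)
    (N : ℕ) : (macaulayMatrix G N).map φ = macaulayMatrix (fun i => map φ (G i)) N := by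
  ext d c
  simp [macaulayMatrix, macaulayColumn, ← coeff_map]

theorem macaulayMatrix_mulVec [Finite σ] (G : ℕ → MvPolynomial σ R) (N : ℕ)
    (u : MacaulayCols σ N → R) :
    macaulayMatrix G N *ᵥ u = degreeCoeffs N (∑ c, u c • macaulayColumn G c) := by
  ext d
  simp [Matrix.mulVec, dotProduct, macaulayMatrix, coeff_sum, mul_comm]

theorem isHomogeneous_macaulayColumn {G : ℕ → MvPolynomial σ R}
    (hG : ∀ i, (G i).IsHomogeneous i) {N : ℕ} (c : MacaulayCols σ N) :
    (macaulayColumn G c).IsHomogeneous N := by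
  have := (isHomogeneous_monomial (1 : R) c.2.2).mul (hG c.1)
  rwa [Nat.sub_add_cancel (Nat.lt_succ_iff.mp c.1.isLt)] at this

theorem degreeCoeffs_mul_mem_range_macaulayMatrix [Finite σ] {G : ℕ → MvPolynomial σ R}
    (hG : ∀ i, (G i).IsHomogeneous i) (N : ℕ) (b : MvPolynomial σ R) (i : ℕ) :
    degreeCoeffs N (b * G i) ∈ LinearMap.range (macaulayMatrix G N).mulVecLin := by
  classical
  induction b using MvPolynomial.induction_on' with
  | monomial e a =>
    rw [show monomial e a = a • monomial e 1 by rw [smul_monomial, smul_eq_mul, mul_one],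
      smul_mul_assoc, map_smul]
    refine Submodule.smul_mem _ _ ?_
    by_cases he : e.degree + i = N
    · refine ⟨Pi.single ⟨⟨i, by omega⟩, ⟨e, show e.degree = N - i by omega⟩⟩ 1, ?_⟩
      ext d
      simp [macaulayMatrix, macaulayColumn]
    · rw [((isHomogeneous_monomial 1 rfl).mul (hG i)).degreeCoeffs_eq_zero he]
      exact zero_mem _
  | add p q hp hq => rw [add_mul, map_add]; exact add_mem hp hq

theorem degreeCoeffs_mem_range_macaulayMatrix [Finite σ] {G : ℕ → MvPolynomial σ R}
    (hG : ∀ i, (G i).IsHomogeneous i) {H : MvPolynomial σ R}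
    (hH : H ∈ Ideal.span (Set.range G)) (N : ℕ) :
    degreeCoeffs N H ∈ LinearMap.range (macaulayMatrix G N).mulVecLin := by
  obtain ⟨b, rfl⟩ := Finsupp.mem_ideal_span_range_iff_exists_finsupp.mp hH
  rw [Finsupp.sum, map_sum]
  exact Submodule.sum_mem _ fun i _ => degreeCoeffs_mul_mem_range_macaulayMatrix hG N (b i) i

theorem monomial_mem_of_forall_X_pow_mem [Fintype σ] {I : Ideal (MvPolynomial σ R)}
    {m : σ → ℕ} (hm : ∀ j, X j ^ m j ∈ I) {d : σ →₀ ℕ} (hd : ∑ j, m j < d.degree) (a : R) :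
    monomial d a ∈ I := by
  obtain ⟨j, hj⟩ : ∃ j, m j ≤ d j := by
    by_contra! h
    exact (Finset.sum_le_sum fun j _ => (h j).le).not_gt (d.degree_eq_sum ▸ hd)
  rw [← tsub_add_cancel_of_le (Finsupp.single_le_iff.mpr hj), ← mul_one a, ← monomial_mul,
    ← X_pow_eq_monomial]
  exact I.mul_mem_left _ (hm j)

theorem surjective_mulVec_macaulayMatrix [Fintype σ] {G : ℕ → MvPolynomial σ R}
    (hG : ∀ i, (G i).IsHomogeneous i) {m : σ → ℕ}
    (hm : ∀ j, X j ^ m j ∈ Ideal.span (Set.range G)) {N : ℕ} (hN : ∑ j, m j < N) :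
    Function.Surjective (macaulayMatrix G N).mulVec := by
  classical
  rw [← Matrix.coe_mulVecLin, ← LinearMap.range_eq_top, Submodule.eq_top_iff']
  intro w
  have hw : degreeCoeffs N (∑ d, monomial d.1 (w d)) = w := by
    ext d'
    simp [coeff_sum, coeff_monomial, Subtype.coe_inj]
  rw [← hw]
  exact degreeCoeffs_mem_range_macaulayMatrix hG
    (Ideal.sum_mem _ fun d _ => monomial_mem_of_forall_X_pow_mem hm (hN.trans_eq d.2.symm) _) N

end Macaulay

section MacaulayField

variable {σ K : Type*} [Field K] {G : ℕ → MvPolynomial σ K}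

theorem not_surjective_mulVec_macaulayMatrix [Finite σ] (hG : ∀ i, (G i).IsHomogeneous i)
    {v : σ → K} (hv : v ≠ 0) (hGv : ∀ i, eval v (G i) = 0) (N : ℕ) :
    ¬ Function.Surjective (macaulayMatrix G N).mulVec := by
  intro hsurj
  obtain ⟨j, hj⟩ : ∃ j, v j ≠ 0 := Function.ne_iff.mp hv
  obtain ⟨u, hu⟩ := hsurj (degreeCoeffs N (X j ^ N))
  rw [macaulayMatrix_mulVec] at hu
  have hH : ∑ c, u c • macaulayColumn G c = X j ^ N := by
    refine IsHomogeneous.eq_of_degreeCoeffs_eq ?_ (isHomogeneous_X_pow j N) hu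
    exact IsHomogeneous.sum _ _ _ fun c _ => by
      simpa only [smul_eq_C_mul] using (isHomogeneous_macaulayColumn hG c).C_mul (u c)
  have := congrArg (eval v) hH
  simp [macaulayColumn, hGv] at this
  exact pow_ne_zero N hj this.symm

theorem exists_surjective_mulVec_macaulayMatrix_iff [Fintype σ] [IsAlgClosed K]
    (hG : ∀ i, (G i).IsHomogeneous i) :
    (∃ N, Function.Surjective (macaulayMatrix G N).mulVec) ↔
      ∀ v : σ → K, (∀ i, eval v (G i) = 0) → v = 0 := by
  constructor
  · rintro ⟨N, hN⟩ v hGv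
    by_contra hv
    exact not_surjective_mulVec_macaulayMatrix hG hv hGv N hN
  · intro h0
    have hX (j : σ) : ∃ n, X j ^ n ∈ Ideal.span (Set.range G) := by
      rw [← Ideal.mem_radical_iff, ← vanishingIdeal_zeroLocus_eq_radical (K := K),
        mem_vanishingIdeal_iff]
      intro v hv
      rw [h0 v fun i => hv _ (Ideal.subset_span ⟨i, rfl⟩)]
      simp
    choose m hm using hX
    exact ⟨_, surjective_mulVec_macaulayMatrix hG hm (Nat.lt_succ_self _)⟩

end MacaulayField

section RestrictLine

variable {σ K R : Type*} [CommRing K] [CommRing R] [Algebra K R]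

/-- `f (a + T • X)` as a polynomial in `T`, the direction `X` being the vector of
indeterminates. -/
def restrictLine (a : σ → R) : MvPolynomial σ K →ₐ[K] Polynomial (MvPolynomial σ R) :=
  aeval fun i => Polynomial.C (C (a i)) + Polynomial.C (X i) * Polynomial.X

def lineCoeff (f : MvPolynomial σ K) (a : σ → R) (n : ℕ) : MvPolynomial σ R :=
  (restrictLine a f).coeff n

theorem map_restrictLine {S : Type*} [CommRing S] [Algebra K S] (φ : R →ₐ[K] S) (a : σ → R)
    (f : MvPolynomial σ K) :
    (restrictLine a f).map (map φ) = restrictLine (φ ∘ a) f := by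
  change Polynomial.mapAlgHom (mapAlgHom φ) (restrictLine a f) = _
  rw [← AlgHom.comp_apply]
  congr 1
  ext i
  simp [restrictLine]

theorem map_lineCoeff {S : Type*} [CommRing S] [Algebra K S] (φ : R →ₐ[K] S)
    (f : MvPolynomial σ K) (a : σ → R) (n : ℕ) :
    map φ (lineCoeff f a n) = lineCoeff f (φ ∘ a) n := by
  rw [lineCoeff, lineCoeff, ← map_restrictLine, Polynomial.coeff_map]

theorem eval_map_restrictLine (f : MvPolynomial σ K) (p v : σ → K) (t : K) :
    ((restrictLine p f).map (eval v)).eval t = eval (p + t • v) f := by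
  have h : (Polynomial.aeval t).comp ((Polynomial.mapAlgHom (aeval v)).comp (restrictLine p)) =
      aeval (p + t • v) := by
    ext i
    simp [restrictLine]
    ring
  simpa using DFunLike.congr_fun h f

theorem forall_eval_add_smul_eq_zero_iff [IsDomain K] [Infinite K] (f : MvPolynomial σ K)
    (p v : σ → K) :
    (∀ t : K, eval (p + t • v) f = 0) ↔ ∀ n, eval v (lineCoeff f p n) = 0 := by
  have h : (∀ t, ((restrictLine p f).map (eval v)).eval t = 0) ↔
      (restrictLine p f).map (eval v) = 0 :=
    ⟨fun h => Polynomial.funext (by simpa using h), fun h t => by simp [h]⟩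
  simp_rw [← eval_map_restrictLine, h, Polynomial.ext_iff, Polynomial.coeff_map,
    Polynomial.coeff_zero, lineCoeff]

theorem isHomogeneous_coeff_mul {P Q : Polynomial (MvPolynomial σ R)}
    (hP : ∀ n, (P.coeff n).IsHomogeneous n) (hQ : ∀ n, (Q.coeff n).IsHomogeneous n) (n : ℕ) :
    ((P * Q).coeff n).IsHomogeneous n := by
  rw [Polynomial.coeff_mul]
  exact IsHomogeneous.sum _ _ _ fun x hx =>
    Finset.HasAntidiagonal.mem_antidiagonal.mp hx ▸ (hP x.1).mul (hQ x.2)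

theorem isHomogeneous_lineCoeff (f : MvPolynomial σ K) (a : σ → R) (n : ℕ) :
    (lineCoeff f a n).IsHomogeneous n := by
  induction f using MvPolynomial.induction_on generalizing n with
  | C c =>
    rcases n with _ | n <;>
      simp [lineCoeff, restrictLine, Polynomial.coeff_C, isHomogeneous_C, isHomogeneous_zero]
  | add f g hf hg =>
    simpa [lineCoeff, Polynomial.coeff_add] using (hf n).add (hg n)
  | mul_X f i hf =>
    rw [lineCoeff, map_mul]
    refine isHomogeneous_coeff_mul hf (fun n => ?_) n
    rcases n with _ | _ | n <;>
      simp [restrictLine, Polynomial.coeff_C, Polynomial.coeff_X, isHomogeneous_C,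
        isHomogeneous_X, isHomogeneous_zero]

end RestrictLine

section Lines

variable {σ K : Type*} [Field K]

def LiesOnLineIn (f : MvPolynomial σ K) (p : σ → K) : Prop :=
  ∃ v : σ → K, v ≠ 0 ∧ ∀ t : K, eval (p + t • v) f = 0

theorem exists_eval_ne_zero_of_not_liesOnLineIn [IsAlgClosed K] [Fintype σ]
    {f : MvPolynomial σ K} {p : σ → K} (hp : ¬ LiesOnLineIn f p) :
    ∃ h : MvPolynomial σ K, eval p h ≠ 0 ∧ ∀ x, LiesOnLineIn f x → eval x h = 0 := by
  have hspec (x : σ → K) (N : ℕ) :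
      (macaulayMatrix (lineCoeff f (X : σ → MvPolynomial σ K)) N).map (eval x) =
        macaulayMatrix (lineCoeff f x) N := by
    rw [map_macaulayMatrix]
    congr 1
    ext1 n
    exact (map_lineCoeff (aeval x) f X n).trans (by congr; ext; simp)
  have hsurj_iff (x : σ → K) :
      (∃ N, Function.Surjective (macaulayMatrix (lineCoeff f x) N).mulVec) ↔
        ¬ LiesOnLineIn f x := by
    rw [exists_surjective_mulVec_macaulayMatrix_iff (isHomogeneous_lineCoeff f x), LiesOnLineIn]
    simp_rw [← forall_eval_add_smul_eq_zero_iff]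
    simp only [not_exists, not_and]
    exact forall_congr' fun v => not_imp_not.symm
  obtain ⟨N, hN⟩ := (hsurj_iff p).mpr hp
  rw [← hspec] at hN
  obtain ⟨h, hhp, hh⟩ := exists_eval_ne_zero_of_surjective_mulVec _ hN
  refine ⟨h, hhp, fun x hx => ?_⟩
  by_contra hhx
  exact (hsurj_iff x).mp ⟨N, hspec x N ▸ hh x hhx⟩ hx

end Lines

end MvPolynomial

end

open MvPolynomial

theorem stmt_10_general (f : MvPolynomial (Fin 3) ℂ) (hf : Irreducible f)
    (V : Set (Fin 3 → ℂ)) (hV : V = {p | eval p f = 0})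
    (C : Set (Fin 3 → ℂ))
    (hC : ∃ S : Set (MvPolynomial (Fin 3) ℂ),
      C = {p | ∀ g ∈ S, eval p g = 0})
    (hne : (V \ C).Nonempty)
    (hlines : ∀ p ∈ V \ C, ∃ v : Fin 3 → ℂ, v ≠ 0 ∧
      ∀ t : ℂ, eval (p + t • v) f = 0) :
    ∀ p ∈ V, ∃ v : Fin 3 → ℂ, v ≠ 0 ∧ ∀ t : ℂ, eval (p + t • v) f = 0 := by
  obtain ⟨S, rfl⟩ := hC
  subst hV
  obtain ⟨q, hfq, hqS⟩ := hne
  obtain ⟨g, hgS, hgq⟩ : ∃ g ∈ S, eval q g ≠ 0 := by simpa using hqS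
  intro p hfp
  by_contra hp
  obtain ⟨h, hhp, hh⟩ := exists_eval_ne_zero_of_not_liesOnLineIn hp
  refine hhp (eval_eq_zero_of_vanishes_on_basicOpen hf hfq hgq (fun x hfx hgx => ?_) hfp)
  exact hh x (hlines x ⟨hfx, fun hxS => hgx (hxS g hgS)⟩)

/-- If an irreducible surface `V = Z(f) ⊂ ℂ³` has a nonempty Zariski-open
subset (the complement in `V` of a Zariski-closed set `C`) all of whose points
lie on lines fully contained in `V`, then every point of `V` lies on a line
fully contained in `V`. -/
theorem stmt_10 (f : MvPolynomial (Fin 3) ℂ) (hf : Irreducible f)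
    (hdeg : 0 < f.totalDegree)
    (V : Set (Fin 3 → ℂ)) (hV : V = {p | eval p f = 0})
    (C : Set (Fin 3 → ℂ))
    (hC : ∃ S : Set (MvPolynomial (Fin 3) ℂ),
      C = {p | ∀ g ∈ S, eval p g = 0})
    (hne : (V \ C).Nonempty)
    (hlines : ∀ p ∈ V \ C, ∃ v : Fin 3 → ℂ, v ≠ 0 ∧
      ∀ t : ℂ, eval (p + t • v) f = 0) :
    ∀ p ∈ V, ∃ v : Fin 3 → ℂ, v ≠ 0 ∧ ∀ t : ℂ, eval (p + t • v) f = 0 :=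
  stmt_10_general f hf V hV C hC hne hlines
end

section
/- Let V be an irreducible algebraic surface in ℂ³ that is a cone: there is a point a ∈ V such that for every p ∈ V, the line through a and p is fully contained in V. Then V has at most one such apex a, unless V is a plane. -/
/-!
Composing the homothety of ratio `s` at one apex `a` with the homothety of ratio `s⁻¹` at the
other apex `b` is a translation by a multiple of `b - a`, so `V` is invariant under all
translations along the line `ab`. If `V` has a point `p` off that line, then `V` contains the
plane through `a`, `b`, `p`; otherwise `V` lies on the line, hence in some plane through it.
Either way `V = Z(f)` is comparable with the zero set of a linear polynomial `ℓ`, and by the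
Nullstellensatz one of the irreducible polynomials `f`, `ℓ` divides the other, so they are
associated and `V = Z(ℓ)`.
-/

open MvPolynomial

open Matrix Submodule

section Cone

variable (K : Type*) {E : Type*} [Field K] [AddCommGroup E] [Module K E]

def IsConeApex (S : Set E) (a : E) : Prop :=
  ∀ p ∈ S, ∀ t : K, a + t • (p - a) ∈ S

variable {K} {S : Set E} {a b p : E}

theorem IsConeApex.apex_mem (ha : IsConeApex K S a) (hp : p ∈ S) : a ∈ S := by
  simpa using ha p hp 0

theorem IsConeApex.add_smul_sub_mem_of_ne_one (ha : IsConeApex K S a) (hb : IsConeApex K S b)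
    (hp : p ∈ S) {t : K} (ht : t ≠ 1) : p + t • (b - a) ∈ S := by
  have hs : 1 - t ≠ 0 := sub_ne_zero.2 ht.symm
  -- the homothety of ratio `(1 - t)⁻¹` at `a`, followed by that of ratio `1 - t` at `b`
  convert hb _ (ha p hp (1 - t)⁻¹) (1 - t) using 1
  simp only [smul_sub, smul_add, smul_smul, mul_inv_cancel₀ hs, one_smul]
  module

theorem IsConeApex.add_smul_sub_mem [Infinite K] (ha : IsConeApex K S a) (hb : IsConeApex K S b)
    (hp : p ∈ S) (t : K) : p + t • (b - a) ∈ S := by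
  classical
  obtain ⟨u, hu⟩ := Infinite.exists_notMem_finset ({1, t - 1} : Finset K)
  simp only [Finset.mem_insert, Finset.mem_singleton, not_or] at hu
  have h := ha.add_smul_sub_mem_of_ne_one hb (ha.add_smul_sub_mem_of_ne_one hb hp hu.1)
    (t := t - u) fun h => hu.2 (by linear_combination -h)
  convert h using 1
  module

theorem IsConeApex.mem_of_sub_mem_span_pair [Infinite K] (ha : IsConeApex K S a)
    (hb : IsConeApex K S b) (hp : p ∈ S) {x : E} (hx : x - a ∈ span K {b - a, p - a}) :
    x ∈ S := by
  obtain ⟨α, β, hαβ⟩ := mem_span_pair.1 hx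
  rcases eq_or_ne β 0 with rfl | hβ
  · convert ha.add_smul_sub_mem hb (ha.apex_mem hp) α using 1
    rw [← sub_eq_iff_eq_add', ← hαβ, zero_smul, add_zero]
  · convert ha _ (ha.add_smul_sub_mem hb hp (α / β)) β using 1
    rw [← sub_eq_iff_eq_add', ← hαβ]
    simp only [smul_sub, smul_add, smul_smul, mul_div_cancel₀ _ hβ]
    module

theorem IsConeApex.exists_plane_subset_or_subset [Infinite K] (hE : 1 < Module.finrank K E)
    (ha : IsConeApex K S a) (hb : IsConeApex K S b) (hab : a ≠ b) :
    ∃ w, LinearIndependent K ![b - a, w] ∧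
      (S ⊆ {x | x - a ∈ span K {b - a, w}} ∨ {x | x - a ∈ span K {b - a, w}} ⊆ S) := by
  have hd : b - a ≠ 0 := sub_ne_zero.2 hab.symm
  by_cases h : ∃ p ∈ S, LinearIndependent K ![b - a, p - a]
  · obtain ⟨p, hp, hli⟩ := h
    exact ⟨p - a, hli, Or.inr fun x hx => ha.mem_of_sub_mem_span_pair hb hp hx⟩
  · obtain ⟨w, hw⟩ := exists_linearIndependent_pair_of_one_lt_finrank hE hd
    refine ⟨w, hw, Or.inl fun p hp => ?_⟩
    obtain ⟨t, ht⟩ : ∃ t : K, t • (b - a) = p - a := by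
      simpa [LinearIndependent.pair_iff' hd] using fun hli => h ⟨p, hp, hli⟩
    exact mem_span_pair.2 ⟨t, 0, by simp [ht]⟩

end Cone

namespace MvPolynomial

section Associated

variable {σ R : Type*} [CommSemiring R]

theorem setOf_eval_eq_zero_eq_of_associated {p q : MvPolynomial σ R} (hpq : Associated p q) :
    {x | eval x p = 0} = {x | eval x q = 0} := by
  obtain ⟨u, rfl⟩ := hpq
  ext x
  simp [(u.isUnit.map (eval x)).mul_left_eq_zero]

end Associated

variable {σ K : Type*} [Field K]

theorem dvd_of_forall_eval_eq_zero [Finite σ] [IsAlgClosed K] {p q : MvPolynomial σ K}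
    (hp : Prime p) (h : ∀ x, eval x p = 0 → eval x q = 0) : p ∣ q := by
  have hprime : (Ideal.span {p}).IsPrime := (Ideal.span_singleton_prime hp.ne_zero).2 hp
  rw [← Ideal.mem_span_singleton, ← IsPrime.vanishingIdeal_zeroLocus (K := K) (Ideal.span {p})]
  intro x hx
  exact h x (hx p (Ideal.subset_span rfl))

theorem setOf_eval_eq_zero_eq_of_subset [Finite σ] [IsAlgClosed K] {p q : MvPolynomial σ K}
    (hp : Irreducible p) (hq : Irreducible q)
    (h : {x | eval x p = 0} ⊆ {x | eval x q = 0}) :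
    {x | eval x p = 0} = {x | eval x q = 0} :=
  setOf_eval_eq_zero_eq_of_associated <| hp.associated_of_dvd hq <|
    dvd_of_forall_eval_eq_zero hp.prime fun _ hx => h hx

variable [Fintype σ]

noncomputable def affinePolynomial (c : σ → K) (e : K) : MvPolynomial σ K :=
  ∑ i, C (c i) * X i + C e

@[simp]
theorem eval_affinePolynomial (c : σ → K) (e : K) (x : σ → K) :
    eval x (affinePolynomial c e) = ∑ i, c i * x i + e := by
  simp [affinePolynomial]

theorem totalDegree_affinePolynomial {c : σ → K} (hc : c ≠ 0) (e : K) :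
    (affinePolynomial c e).totalDegree = 1 := by
  classical
  refine le_antisymm ?_ (Nat.one_le_iff_ne_zero.2 fun h => ?_)
  · refine (totalDegree_add _ _).trans (max_le (totalDegree_finsetSum_le fun i _ => ?_) ?_)
    · exact (totalDegree_mul _ _).trans (by simp)
    · simp
  · obtain ⟨j, hj⟩ := Function.ne_iff.1 hc
    obtain ⟨r, hr⟩ : ∃ r, affinePolynomial c e = C r := ⟨_, totalDegree_eq_zero_iff_eq_C.1 h⟩
    have h0 := congrArg (eval 0) hr
    have hj' := congrArg (eval (Pi.single j (c j)⁻¹)) hr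
    simp only [eval_affinePolynomial, eval_C, Pi.zero_apply, mul_zero, Finset.sum_const_zero,
      zero_add] at h0
    simp [Pi.single_apply, h0] at hj'
    exact hj hj'

theorem irreducible_affinePolynomial {c : σ → K} (hc : c ≠ 0) (e : K) :
    Irreducible (affinePolynomial c e) := by
  refine irreducible_of_totalDegree_eq_one (totalDegree_affinePolynomial hc e) fun r hr => ?_
  refine isUnit_iff_ne_zero.2 fun hr0 => ?_
  have : affinePolynomial c e = 0 := by
    ext m
    simpa [hr0] using hr m
  simpa [this] using totalDegree_affinePolynomial hc e

end MvPolynomial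

section CrossProduct

variable {K : Type*} [Field K] {u v : Fin 3 → K}

theorem cross_dotProduct_eq_zero_iff_mem_span (huv : LinearIndependent K ![u, v])
    {x : Fin 3 → K} : (u ⨯₃ v) ⬝ᵥ x = 0 ↔ x ∈ span K {u, v} := by
  constructor
  · intro h
    by_contra hx
    have hli : LinearIndependent K ![x, u, v] :=
      linearIndependent_finCons.2 ⟨huv, by rwa [range_cons_cons_empty]⟩
    rw [dotProduct_comm, triple_product_eq_det] at h
    exact (isUnit_iff_isUnit_det _).1 (linearIndependent_rows_iff_isUnit.1 hli) |>.ne_zero h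
  · intro hx
    obtain ⟨α, β, rfl⟩ := mem_span_pair.1 hx
    rw [dotProduct_add, dotProduct_smul, dotProduct_smul, dotProduct_comm, dot_self_cross,
      dotProduct_comm, dot_cross_self, smul_zero, smul_zero, add_zero]

theorem setOf_sub_mem_span_pair_eq_setOf_eval_eq_zero (huv : LinearIndependent K ![u, v])
    (a : Fin 3 → K) :
    {x | x - a ∈ span K {u, v}} =
      {x | eval x (affinePolynomial (u ⨯₃ v) (-((u ⨯₃ v) ⬝ᵥ a))) = 0} := by
  ext x
  rw [Set.mem_ofPred_eq, ← cross_dotProduct_eq_zero_iff_mem_span huv, dotProduct_sub,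
    sub_eq_add_neg, Set.mem_ofPred_eq, eval_affinePolynomial]
  rfl

end CrossProduct

theorem stmt_12_general (f : MvPolynomial (Fin 3) ℂ) (hf : Irreducible f)
    (V : Set (Fin 3 → ℂ)) (hV : V = {p | eval p f = 0})
    (a b : Fin 3 → ℂ)
    (hconeA : ∀ p ∈ V, ∀ t : ℂ, (a + t • (p - a)) ∈ V)
    (hconeB : ∀ p ∈ V, ∀ t : ℂ, (b + t • (p - b)) ∈ V) :
    a = b ∨ ∃ c : Fin 3 → ℂ, c ≠ 0 ∧ ∃ e : ℂ,
      V = {p | (∑ i, c i * p i) + e = 0} := by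
  rcases eq_or_ne a b with hab | hab
  · exact Or.inl hab
  subst hV
  obtain ⟨w, hw, hcomp⟩ := IsConeApex.exists_plane_subset_or_subset (K := ℂ)
    (by rw [Module.finrank_fin_fun]; norm_num) hconeA hconeB hab
  have hc : (b - a) ⨯₃ w ≠ 0 := crossProduct_ne_zero_iff_linearIndependent.2 hw
  rw [setOf_sub_mem_span_pair_eq_setOf_eval_eq_zero hw] at hcomp
  refine Or.inr ⟨_, hc, -(((b - a) ⨯₃ w) ⬝ᵥ a), ?_⟩
  simp only [← eval_affinePolynomial]
  rcases hcomp with h | h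
  · exact setOf_eval_eq_zero_eq_of_subset hf (irreducible_affinePolynomial hc _) h
  · exact (setOf_eval_eq_zero_eq_of_subset (irreducible_affinePolynomial hc _) hf h).symm

/-- An irreducible surface `V = Z(f) ⊂ ℂ³` which is a cone has at most one
apex, unless it is a plane. -/
theorem stmt_12 (f : MvPolynomial (Fin 3) ℂ) (hf : Irreducible f)
    (hdeg : 0 < f.totalDegree)
    (V : Set (Fin 3 → ℂ)) (hV : V = {p | eval p f = 0})
    (a b : Fin 3 → ℂ) (ha : a ∈ V) (hb : b ∈ V)
    (hconeA : ∀ p ∈ V, ∀ t : ℂ, (a + t • (p - a)) ∈ V)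
    (hconeB : ∀ p ∈ V, ∀ t : ℂ, (b + t • (p - b)) ∈ V) :
    a = b ∨ ∃ c : Fin 3 → ℂ, c ≠ 0 ∧ ∃ e : ℂ,
      V = {p | (∑ i, c i * p i) + e = 0} :=
  stmt_12_general f hf V hV a b hconeA hconeB
end
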